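/- Let S be a finite set with |S| = n ≥ 3, let P be an irreducible stochastic matrix on S, and let μ be a probability measure consistent with P. Then k(μ) = n − 1 if and only if the set 𝒞(μ) of possible coalescing pairs contains exactly one pair. -/

import Mathlib

open MeasureTheory

namespace CFTP

variable {S : Type*}

/-- Forward composition `f_t ∘ f_{t-1} ∘ ⋯ ∘ f_1` (functions are indexed by 1,2,…). -/
def fwd (f : ℕ → S → S) : ℕ → S → S
  | 0 => id
  | t + 1 => f (t + 1) ∘ fwd f t

/-- Backward composition `f_1 ∘ f_2 ∘ ⋯ ∘ f_t`. -/
def bwd (f : ℕ → S → S) : ℕ → S → S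
  | 0 => id
  | t + 1 => bwd f t ∘ f (t + 1)

/-- `k_t(f⃗)`: the number of equivalence classes of `i ~ j ↔ f⃗_t i = f⃗_t j`,
i.e. the cardinality of the image of the forward composition. -/
noncomputable def ktF (f : ℕ → S → S) (t : ℕ) : ℕ := Set.ncard (Set.range (fwd f t))

/-- `k_t(f⃖)`: the cardinality of the image of the backward composition. -/
noncomputable def ktB (f : ℕ → S → S) (t : ℕ) : ℕ := Set.ncard (Set.range (bwd f t))

/-- `k(f⃗)`: the eventual (= minimal) value of the non-increasing sequence `k_t(f⃗)`. -/
noncomputable def kF (f : ℕ → S → S) : ℕ := ⨅ t, ktF f t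

/-- `k(f⃖)`. -/
noncomputable def kB (f : ℕ → S → S) : ℕ := ⨅ t, ktB f t

/-- `μbar` is the joint law of an i.i.d. sequence with one-step law `ν`,
i.e. the countable product measure `∏_{s ∈ ℕ} ν`, characterised by its
values on cylinder events. -/
def IsIID [MeasurableSpace S] (ν : Measure (S → S)) (μbar : Measure (ℕ → S → S)) : Prop :=
  ∀ (I : Finset ℕ) (g : ℕ → S → S),
    μbar {F | ∀ s ∈ I, F s = g s} = ∏ s ∈ I, ν {g s}

/-- The support of a probability measure on the finite set `F_S`. -/
def supp [MeasurableSpace S] (ν : Measure (S → S)) : Set (S → S) := {f | 0 < ν {f}}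

/-- A stochastic matrix: nonnegative entries, row sums one. -/
def IsStochastic [Fintype S] (P : S → S → ℝ) : Prop :=
  (∀ i j, 0 ≤ P i j) ∧ ∀ i, ∑ j, P i j = 1

/-- `ν ∈ L(P)`: the measure `ν` on `F_S` is consistent with the matrix `P`. -/
def Consistent [Fintype S] [MeasurableSpace S] (P : S → S → ℝ) (ν : Measure (S → S)) : Prop :=
  ∀ i j, ν {f : S → S | f i = j} = ENNReal.ofReal (P i j)

/-- Irreducibility: for all `i j` some power of `P` has positive `(i,j)` entry. -/
def Irred [Fintype S] [DecidableEq S] (P : S → S → ℝ) : Prop :=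
  ∀ i j, ∃ t, 1 ≤ t ∧ 0 < ((Matrix.of P) ^ t) i j

/-- Aperiodicity: for each `i`, the gcd of `{t ≥ 1 : (P^t)_{i,i} > 0}` is `1`,
expressed as: every common divisor of that set equals `1`. -/
def Aperiodic [Fintype S] [DecidableEq S] (P : S → S → ℝ) : Prop :=
  ∀ i, ∀ d : ℕ, (∀ t, 1 ≤ t → 0 < ((Matrix.of P) ^ t) i i → d ∣ t) → d = 1

/-- A function is constant. -/
def IsConst (g : S → S) : Prop := ∀ i j, g i = g j

/-- The backward coalescence time `C`. -/
noncomputable def Ctime (F : ℕ → S → S) : ℕ∞ :=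
  sInf ((fun t : ℕ => (t : ℕ∞)) '' {t : ℕ | 1 ≤ t ∧ IsConst (bwd F t)})

/-- The forward coalescence time `T`. -/
noncomputable def Ttime (F : ℕ → S → S) : ℕ∞ :=
  sInf ((fun t : ℕ => (t : ℕ∞)) '' {t : ℕ | 1 ≤ t ∧ IsConst (fwd F t)})

/-- The 0-1 matrix `M_f`. -/
noncomputable def Mmat [Fintype S] [DecidableEq S] (f : S → S) : Matrix S S ℝ :=
  Matrix.of fun i j => if f i = j then 1 else 0

/-- The product `M_{f_t} M_{f_{t-1}} ⋯ M_{f_1}`. -/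
noncomputable def Mprod [Fintype S] [DecidableEq S] (f : ℕ → S → S) : ℕ → Matrix S S ℝ
  | 0 => 1
  | t + 1 => Mmat (f (t + 1)) * Mprod f t

/-- The event that states `i` and `j` coalesce. -/
def coalEvent (i j : S) : Set (ℕ → S → S) := {F | ∃ t, 1 ≤ t ∧ fwd F t i = fwd F t j}

/-!
Call a sequence of maps whose letters all have positive `ν`-mass a support word. Its cylinder has
positive `μbar`-probability, so its forward compositions have images of at least `k(μ)` points,
and a pair coalesces with positive probability iff some support word merges it.

If `k(μ) = n - 1`, a support word merging a pair misses exactly one state, and that state lies in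
every coalescing pair: otherwise appending a word merging a second pair would leave `n - 2`
points. With two different coalescing pairs the missing state is therefore always their common
point `c`, so no map in the support sends a state `x ≠ c` to `c`; then `P x c = 0` for all
`x ≠ c`, contradicting irreducibility. Conversely, a support word whose image has
`k(μ) < n - 1` points merges two different pairs.
-/

lemma fwd_congr {f g : ℕ → S → S} {T : ℕ} (h : ∀ s ∈ Finset.Icc 1 T, f s = g s) :
    fwd f T = fwd g T := by
  induction T with
  | zero => rfl
  | succ t ih =>
    simp only [fwd, ih fun s hs => h s (Finset.Icc_subset_Icc_right t.le_succ hs),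
      h (t + 1) (Finset.mem_Icc.2 ⟨t.succ_pos, le_rfl⟩)]

def seqAppend (g : ℕ → S → S) (T : ℕ) (h : ℕ → S → S) : ℕ → S → S :=
  fun s => if s ≤ T then g s else h (s - T)

lemma fwd_seqAppend (g h : ℕ → S → S) (T T' : ℕ) :
    fwd (seqAppend g T h) (T + T') = fwd h T' ∘ fwd g T := by
  induction T' with
  | zero => exact fwd_congr fun s hs => if_pos (Finset.mem_Icc.1 hs).2
  | succ t ih =>
    have hlast : seqAppend g T h (T + t + 1) = h (t + 1) := by
      rw [seqAppend, if_neg (by omega), show T + t + 1 - T = t + 1 by omega]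
    show seqAppend g T h (T + t + 1) ∘ fwd (seqAppend g T h) (T + t) =
      h (t + 1) ∘ fwd h t ∘ fwd g T
    rw [hlast, ih]

lemma range_seqAppend_subset (g : ℕ → S → S) (T : ℕ) (h : ℕ → S → S) :
    Set.range (seqAppend g T h) ⊆ Set.range g ∪ Set.range h := by
  rintro _ ⟨s, rfl⟩
  unfold seqAppend
  split_ifs
  exacts [Or.inl ⟨s, rfl⟩, Or.inr ⟨s - T, rfl⟩]

section Collapse

variable {φ : S → S} {a b : S}

lemma range_eq_image_compl_singleton (hab : a ≠ b) (h : φ a = φ b) :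
    Set.range φ = φ '' {b}ᶜ := by
  refine Set.Subset.antisymm ?_ (Set.image_subset_range _ _)
  rintro _ ⟨x, rfl⟩
  by_cases hx : x = b
  · exact ⟨a, hab, by rw [h, hx]⟩
  · exact ⟨x, hx, rfl⟩

lemma injOn_compl_singleton_iff (hab : a ≠ b) (h : φ a = φ b) :
    Set.InjOn φ {b}ᶜ ↔ ∀ c d, c ≠ d → φ c = φ d → s(c, d) = s(a, b) := by
  constructor
  · intro hinj c d hcd hφ
    by_cases hc : c = b
    · subst hc
      rw [hinj (Ne.symm hcd) hab (hφ.symm.trans h.symm), Sym2.eq_swap]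
    by_cases hd : d = b
    · subst hd
      rw [hinj hc hab (hφ.trans h.symm)]
    exact absurd (hinj hc hd hφ) hcd
  · intro hpair x hx y hy hxy
    by_contra hne
    have hb : b ∈ s(x, y) := hpair x y hne hxy ▸ Sym2.mem_mk_right a b
    rcases Sym2.mem_iff.1 hb with rfl | rfl
    exacts [hx rfl, hy rfl]

variable [Fintype S]

lemma exists_ne_apply_eq_of_ncard_range_lt (h : (Set.range φ).ncard < Fintype.card S) :
    ∃ a b, a ≠ b ∧ φ a = φ b := by
  by_contra! hφ
  refine h.ne ?_
  rw [Set.ncard_range_of_injective fun x y hxy => by_contra fun hne => hφ x y hne hxy,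
    Nat.card_eq_fintype_card]

lemma ncard_compl_singleton (b : S) : ({b}ᶜ : Set S).ncard = Fintype.card S - 1 := by
  rw [Set.ncard_compl, Set.ncard_singleton, Nat.card_eq_fintype_card]

lemma exists_eq_compl_singleton_of_ncard_eq [Nonempty S] {s : Set S}
    (h : s.ncard = Fintype.card S - 1) : ∃ z, s = {z}ᶜ := by
  have hc : sᶜ.ncard = 1 := by
    have := Fintype.card_pos (α := S)
    rw [Set.ncard_compl, h, Nat.card_eq_fintype_card]
    omega
  obtain ⟨z, hz⟩ := Set.ncard_eq_one.1 hc
  exact ⟨z, by rw [← hz, compl_compl]⟩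

lemma ncard_range_le_card_sub_one (hab : a ≠ b) (h : φ a = φ b) :
    (Set.range φ).ncard ≤ Fintype.card S - 1 := by
  rw [range_eq_image_compl_singleton hab h, ← ncard_compl_singleton b]
  exact Set.ncard_image_le

lemma ncard_range_eq_card_sub_one_iff (hab : a ≠ b) (h : φ a = φ b) :
    (Set.range φ).ncard = Fintype.card S - 1 ↔
      ∀ c d, c ≠ d → φ c = φ d → s(c, d) = s(a, b) := by
  rw [range_eq_image_compl_singleton hab h, ← ncard_compl_singleton b, Set.ncard_image_iff,
    injOn_compl_singleton_iff hab h]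

end Collapse

theorem _root_.Matrix.pow_apply_eq_zero_of_forall_ne {ι R : Type*} [Fintype ι] [DecidableEq ι]
    [Semiring R] {M : Matrix ι ι R} {c : ι} (h : ∀ x ≠ c, M x c = 0) (t : ℕ) :
    ∀ x ≠ c, (M ^ t) x c = 0 := by
  induction t with
  | zero => exact fun x hx => Matrix.one_apply_ne hx
  | succ t ih =>
    intro x hx
    rw [pow_succ, Matrix.mul_apply]
    refine Finset.sum_eq_zero fun k _ => ?_
    by_cases hk : k = c
    · rw [hk, ih x hx, zero_mul]
    · rw [h k hk, mul_zero]

lemma kF_le_ktF (F : ℕ → S → S) (t : ℕ) : kF F ≤ ktF F t :=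
  ciInf_le (OrderBot.bddBelow _) t

lemma exists_ktF_eq_kF (F : ℕ → S → S) : ∃ t, ktF F t = kF F :=
  ciInf_mem _

section Measure

variable [MeasurableSpace S] {ν : Measure (S → S)} {μbar : Measure (ℕ → S → S)}

lemma IsIID.measure_eval (hiid : IsIID ν μbar) (s : ℕ) (f : S → S) :
    μbar {F | F s = f} = ν {f} := by
  simpa using hiid {s} fun _ => f

lemma IsIID.measure_cyl_pos (hiid : IsIID ν μbar) {g : ℕ → S → S} (hg : Set.range g ⊆ supp ν)
    (T : ℕ) : 0 < μbar {F | ∀ s ∈ Finset.Icc 1 T, F s = g s} := by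
  rw [hiid]
  exact CanonicallyOrderedAdd.prod_pos.2 fun s _ => hg ⟨s, rfl⟩

variable [Finite S]

lemma IsIID.ae_range_subset_supp (hiid : IsIID ν μbar) :
    ∀ᵐ F ∂μbar, Set.range F ⊆ supp ν := by
  simp only [Set.range_subset_iff]
  refine ae_all_iff.2 fun s => ?_
  have hnull : μbar (⋃ f ∈ (supp ν)ᶜ, {F | F s = f}) = 0 :=
    (measure_biUnion_null_iff (Set.to_countable _)).2 fun f hf =>
      (hiid.measure_eval s f).trans (by simpa [supp] using hf)
  filter_upwards [measure_eq_zero_iff_ae_notMem.1 hnull] with F hF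
  by_contra h
  exact hF (Set.mem_biUnion h rfl)

lemma coalEvent_pos_iff (hiid : IsIID ν μbar) {a b : S} (hab : a ≠ b) :
    0 < μbar (coalEvent a b) ↔
      ∃ g : ℕ → S → S, Set.range g ⊆ supp ν ∧ ∃ T, fwd g T a = fwd g T b := by
  constructor
  · intro h
    obtain ⟨F, ⟨T, -, hT⟩, hF⟩ :=
      Measure.exists_mem_of_measure_ne_zero_of_ae h.ne'
        (ae_restrict_of_ae hiid.ae_range_subset_supp)
    exact ⟨F, hF, T, hT⟩
  · rintro ⟨g, hg, T, hT⟩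
    have hT1 : 1 ≤ T := Nat.one_le_iff_ne_zero.2 (by rintro rfl; exact hab hT)
    refine (hiid.measure_cyl_pos hg T).trans_le (measure_mono fun F hF => ⟨T, hT1, ?_⟩)
    rw [fwd_congr hF, hT]

variable [DiscreteMeasurableSpace S]

lemma measurable_fwd (t : ℕ) : Measurable fun F : ℕ → S → S => fwd F t := by
  induction t with
  | zero => exact measurable_const
  | succ t ih =>
    exact (Measurable.of_discrete (f := fun p : (S → S) × (S → S) => p.1 ∘ p.2)).comp
      ((measurable_pi_apply (t + 1)).prodMk ih)

lemma measurable_kF : Measurable (kF : (ℕ → S → S) → ℕ) :=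
  Measurable.iInf fun t =>
    (Measurable.of_discrete (f := fun φ : S → S => (Set.range φ).ncard)).comp (measurable_fwd t)

variable [IsProbabilityMeasure μbar] {kstar : ℕ}

lemma ae_kF_eq (hk : μbar {F | kF F = kstar} = 1) : ∀ᵐ F ∂μbar, kF F = kstar :=
  (ae_iff_measure_eq (measurable_kF (measurableSet_singleton kstar)).nullMeasurableSet).2
    (by rw [measure_univ]; exact hk)

lemma le_ktF_of_range_subset_supp (hiid : IsIID ν μbar) (hk : μbar {F | kF F = kstar} = 1)
    {g : ℕ → S → S} (hg : Set.range g ⊆ supp ν) (T : ℕ) : kstar ≤ ktF g T := by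
  obtain ⟨F, hF, rfl⟩ :=
    Measure.exists_mem_of_measure_ne_zero_of_ae (hiid.measure_cyl_pos hg T).ne'
      (ae_restrict_of_ae (ae_kF_eq hk))
  calc kF F ≤ ktF F T := kF_le_ktF F T
    _ = ktF g T := by rw [ktF, ktF, fwd_congr hF]

lemma exists_range_subset_supp_ktF_eq (hiid : IsIID ν μbar) (hk : μbar {F | kF F = kstar} = 1) :
    ∃ g : ℕ → S → S, Set.range g ⊆ supp ν ∧ ∃ T, ktF g T = kstar := by
  obtain ⟨F, hF, rfl⟩ := (hiid.ae_range_subset_supp.and (ae_kF_eq hk)).exists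
  exact ⟨F, hF, exists_ktF_eq_kF F⟩

end Measure

section Chain

variable [Fintype S] {P : S → S → ℝ}

lemma Consistent.apply_eq_zero [MeasurableSpace S] {ν : Measure (S → S)}
    (hcons : Consistent P ν) (hP : IsStochastic P) {x y : S} (h : ∀ f ∈ supp ν, f x ≠ y) :
    P x y = 0 := by
  have hν : ν {f : S → S | f x = y} = 0 :=
    measure_eq_zero_iff_ae_notMem.2 (ae_iff_of_countable.2 fun f hf => h f (pos_iff_ne_zero.2 hf))
  exact le_antisymm (ENNReal.ofReal_eq_zero.1 (hcons x y ▸ hν)) (hP.1 x y)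

variable [DecidableEq S]

lemma Irred.eq_of_forall_ne_apply_eq_zero (hirr : Irred P) {c : S} (h : ∀ x ≠ c, P x c = 0)
    (x : S) : x = c := by
  by_contra hx
  obtain ⟨t, -, ht⟩ := hirr x c
  exact ht.ne' (Matrix.pow_apply_eq_zero_of_forall_ne (M := Matrix.of P) h t x hx)

end Chain

section Coalescence

variable [Fintype S] [MeasurableSpace S] [DiscreteMeasurableSpace S]
  {ν : Measure (S → S)} {μbar : Measure (ℕ → S → S)} [IsProbabilityMeasure μbar]
  {g : ℕ → S → S} {T : ℕ} {a b : S}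

lemma ncard_range_fwd_eq_card_sub_one (hiid : IsIID ν μbar)
    (hk : μbar {F | kF F = Fintype.card S - 1} = 1) (hg : Set.range g ⊆ supp ν) (hab : a ≠ b)
    (h : fwd g T a = fwd g T b) : (Set.range (fwd g T)).ncard = Fintype.card S - 1 :=
  (ncard_range_le_card_sub_one hab h).antisymm (le_ktF_of_range_subset_supp hiid hk hg T)

lemma mem_of_range_fwd_eq_compl_singleton (hiid : IsIID ν μbar)
    (hk : μbar {F | kF F = Fintype.card S - 1} = 1) (hg : Set.range g ⊆ supp ν) (hab : a ≠ b)
    (h : fwd g T a = fwd g T b) {z : S} (hz : Set.range (fwd g T) = {z}ᶜ) {x y : S}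
    (hxy : x ≠ y) (hcoal : 0 < μbar (coalEvent x y)) : z ∈ s(x, y) := by
  by_contra hzxy
  obtain ⟨x₀, rfl⟩ : x ∈ Set.range (fwd g T) :=
    hz ▸ fun hxz => hzxy (hxz ▸ Sym2.mem_mk_left _ _)
  obtain ⟨y₀, rfl⟩ : y ∈ Set.range (fwd g T) :=
    hz ▸ fun hyz => hzxy (hyz ▸ Sym2.mem_mk_right _ _)
  obtain ⟨u, hu, T', hu₀⟩ := (coalEvent_pos_iff hiid hxy).1 hcoal
  have hw : Set.range (seqAppend g T u) ⊆ supp ν :=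
    (range_seqAppend_subset g T u).trans (Set.union_subset hg hu)
  have hfwd := fwd_seqAppend g u T T'
  have hwab : fwd (seqAppend g T u) (T + T') a = fwd (seqAppend g T u) (T + T') b := by
    rw [hfwd, Function.comp_apply, h, Function.comp_apply]
  have hpair := (ncard_range_eq_card_sub_one_iff hab hwab).1
    (ncard_range_fwd_eq_card_sub_one hiid hk hw hab hwab) x₀ y₀ (by rintro rfl; exact hxy rfl)
    (by rw [hfwd]; exact hu₀)
  rcases Sym2.eq_iff.1 hpair with ⟨rfl, rfl⟩ | ⟨rfl, rfl⟩
  exacts [hxy h, hxy h.symm]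

lemma exists_forall_mem_supp_apply_ne (hiid : IsIID ν μbar)
    (hk : μbar {F | kF F = Fintype.card S - 1} = 1) {i j i' j' : S} (hij : i ≠ j)
    (hij' : i' ≠ j') (hcoal : 0 < μbar (coalEvent i j)) (hcoal' : 0 < μbar (coalEvent i' j'))
    (hne : s(i', j') ≠ s(i, j)) : ∃ c, ∀ f ∈ supp ν, ∀ x ≠ c, f x ≠ c := by
  have hmissing : ∀ g : ℕ → S → S, Set.range g ⊆ supp ν → ∀ T, fwd g T i = fwd g T j →
      ∃ z ∈ s(i, j), z ∈ s(i', j') ∧ Set.range (fwd g T) = {z}ᶜ := by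
    intro g hg T h
    have : Nonempty S := ⟨i⟩
    obtain ⟨z, hz⟩ := exists_eq_compl_singleton_of_ncard_eq
      (ncard_range_fwd_eq_card_sub_one hiid hk hg hij h)
    exact ⟨z, mem_of_range_fwd_eq_compl_singleton hiid hk hg hij h hz hij hcoal,
      mem_of_range_fwd_eq_compl_singleton hiid hk hg hij h hz hij' hcoal', hz⟩
  obtain ⟨u, hu, T, hu₀⟩ := (coalEvent_pos_iff hiid hij).1 hcoal
  obtain ⟨c, hc, hc', hcrange⟩ := hmissing u hu T hu₀
  refine ⟨c, fun f hf x hx => ?_⟩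
  have hw : Set.range (seqAppend u T fun _ => f) ⊆ supp ν :=
    (range_seqAppend_subset u T _).trans (Set.union_subset hu (by simpa using hf))
  have hfwd : fwd (seqAppend u T fun _ => f) (T + 1) = f ∘ fwd u T := fwd_seqAppend u _ T 1
  obtain ⟨z, hz, hz', hzrange⟩ :=
    hmissing _ hw (T + 1) (by rw [hfwd, Function.comp_apply, hu₀]; rfl)
  have hzc : z = c := by
    by_contra hzc
    exact hne (((Sym2.mem_and_mem_iff hzc).1 ⟨hz', hc'⟩).trans
      ((Sym2.mem_and_mem_iff hzc).1 ⟨hz, hc⟩).symm)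
  obtain ⟨x₀, rfl⟩ : x ∈ Set.range (fwd u T) := hcrange ▸ hx
  have : f (fwd u T x₀) ∈ Set.range (fwd (seqAppend u T fun _ => f) (T + 1)) :=
    ⟨x₀, by rw [hfwd]; rfl⟩
  rwa [hzrange, hzc] at this

lemma sym2_eq_of_coalEvent_pos [DecidableEq S] {P : S → S → ℝ} (hP : IsStochastic P)
    (hirr : Irred P) (hcons : Consistent P ν) (hiid : IsIID ν μbar)
    (hk : μbar {F | kF F = Fintype.card S - 1} = 1) {i j i' j' : S} (hij : i ≠ j)
    (hij' : i' ≠ j') (hcoal : 0 < μbar (coalEvent i j)) (hcoal' : 0 < μbar (coalEvent i' j')) :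
    s(i', j') = s(i, j) := by
  by_contra hne
  obtain ⟨c, hc⟩ := exists_forall_mem_supp_apply_ne hiid hk hij hij' hcoal hcoal' hne
  have hPc : ∀ x ≠ c, P x c = 0 := fun x hx => hcons.apply_eq_zero hP fun f hf => hc f hf x hx
  exact hij ((hirr.eq_of_forall_ne_apply_eq_zero hPc i).trans
    (hirr.eq_of_forall_ne_apply_eq_zero hPc j).symm)

variable {kstar : ℕ}

lemma exists_coalEvent_pos (hiid : IsIID ν μbar) (hk : μbar {F | kF F = kstar} = 1)
    (hlt : kstar < Fintype.card S) : ∃ a b : S, a ≠ b ∧ 0 < μbar (coalEvent a b) := by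
  obtain ⟨g, hg, T, hT⟩ := exists_range_subset_supp_ktF_eq hiid hk
  obtain ⟨a, b, hab, h⟩ := exists_ne_apply_eq_of_ncard_range_lt (hT ▸ hlt : ktF g T < _)
  exact ⟨a, b, hab, (coalEvent_pos_iff hiid hab).2 ⟨g, hg, T, h⟩⟩

lemma exists_two_coalEvent_pos (hiid : IsIID ν μbar) (hk : μbar {F | kF F = kstar} = 1)
    (hlt : kstar < Fintype.card S - 1) : ∃ a b c d : S, a ≠ b ∧ 0 < μbar (coalEvent a b) ∧
      c ≠ d ∧ 0 < μbar (coalEvent c d) ∧ s(c, d) ≠ s(a, b) := by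
  obtain ⟨g, hg, T, hT⟩ := exists_range_subset_supp_ktF_eq hiid hk
  rw [ktF] at hT
  obtain ⟨a, b, hab, h⟩ := exists_ne_apply_eq_of_ncard_range_lt (φ := fwd g T) (by omega)
  obtain ⟨c, d, hcd, h', hne⟩ : ∃ c d, c ≠ d ∧ fwd g T c = fwd g T d ∧ s(c, d) ≠ s(a, b) := by
    by_contra! hall
    have := (ncard_range_eq_card_sub_one_iff hab h).2 hall
    omega
  exact ⟨a, b, c, d, hab, (coalEvent_pos_iff hiid hab).2 ⟨g, hg, T, h⟩, hcd,
    (coalEvent_pos_iff hiid hcd).2 ⟨g, hg, T, h'⟩, hne⟩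

end Coalescence

theorem stmt15_general [Fintype S] [DecidableEq S]
    [MeasurableSpace S] [DiscreteMeasurableSpace S]
    (n : ℕ) (hcard : Fintype.card S = n) (hn : 3 ≤ n)
    (P : S → S → ℝ) (hP : IsStochastic P) (hirr : Irred P)
    (ν : Measure (S → S)) (hcons : Consistent P ν)
    (μbar : Measure (ℕ → S → S)) [IsProbabilityMeasure μbar] (hiid : IsIID ν μbar)
    (kstar : ℕ) (hk : μbar {F | kF F = kstar} = 1) :
    kstar = n - 1 ↔
      ∃ i j : S, i ≠ j ∧ 0 < μbar (coalEvent i j) ∧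
        ∀ i' j' : S, i' ≠ j' → 0 < μbar (coalEvent i' j') →
          (i' = i ∧ j' = j) ∨ (i' = j ∧ j' = i) := by
  subst hcard
  simp only [← Sym2.eq_iff]
  constructor
  · rintro rfl
    obtain ⟨i, j, hij, hcoal⟩ := exists_coalEvent_pos hiid hk (by omega)
    exact ⟨i, j, hij, hcoal, fun i' j' hij' hcoal' =>
      sym2_eq_of_coalEvent_pos hP hirr hcons hiid hk hij hij' hcoal hcoal'⟩
  · rintro ⟨i, j, hij, hcoal, hunique⟩
    obtain ⟨u, hu, T, hu₀⟩ := (coalEvent_pos_iff hiid hij).1 hcoal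
    refine ((le_ktF_of_range_subset_supp hiid hk hu T).trans
      (ncard_range_le_card_sub_one hij hu₀)).antisymm (not_lt.1 fun hlt => ?_)
    obtain ⟨a, b, c, d, hab, hcoalab, hcd, hcoalcd, hne⟩ := exists_two_coalEvent_pos hiid hk hlt
    exact hne ((hunique c d hcd hcoalcd).trans (hunique a b hab hcoalab).symm)

theorem stmt15 [Fintype S] [DecidableEq S]
    [MeasurableSpace S] [DiscreteMeasurableSpace S]
    (n : ℕ) (hcard : Fintype.card S = n) (hn : 3 ≤ n)
    (P : S → S → ℝ) (hP : IsStochastic P) (hirr : Irred P)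
    (ν : Measure (S → S)) [IsProbabilityMeasure ν] (hcons : Consistent P ν)
    (μbar : Measure (ℕ → S → S)) [IsProbabilityMeasure μbar] (hiid : IsIID ν μbar)
    (kstar : ℕ) (hk : μbar {F | kF F = kstar} = 1) :
    kstar = n - 1 ↔
      ∃ i j : S, i ≠ j ∧ 0 < μbar (coalEvent i j) ∧
        ∀ i' j' : S, i' ≠ j' → 0 < μbar (coalEvent i' j') →
          (i' = i ∧ j' = j) ∨ (i' = j ∧ j' = i) :=
  stmt15_general n hcard hn P hP hirr ν hcons μbar hiid kstar hk

end CFTP
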